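/- arXiv:2310.05662 — 4 statements merged into one kernel-verified Lean document; each statement's English description precedes it below -/
import Mathlib

section
/- Let ρ > 0, a > 0, l > 0 and ω ≠ 0 be real numbers, and set c = Real.sqrt (a/ρ). Then the matrix exponential of the 2×2 real matrix l • ![![0, 1/a], ![−ρ*ω^2, 0]] equals the layer transfer matrix ![![Real.cos (ω*l/c), Real.sin (ω*l/c) / (ω * Real.sqrt (ρ*a))], ![−ω * Real.sqrt (ρ*a) * Real.sin (ω*l/c), Real.cos (ω*l/c)]]. -/
/-!
With the wave speed `c = √(a/ρ)` and the impedance `z = ω √(ρa) = ωρc`, the generator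
`l • !![0, 1/a; -ρω², 0]` equals `θ • J` for the phase `θ = ωl/c` and `J = !![0, z⁻¹; -z, 0]`.
Since `J * J = -1`, sending `I ↦ J` embeds `ℂ` into the matrices, so `exp (θ • J)` is the image of
`exp (θ I) = cos θ + sin θ I`, namely `cos θ • 1 + sin θ • J`.
-/

open NormedSpace

theorem NormedSpace.exp_smul_of_mul_self_eq_neg_one {A : Type*} [NormedRing A]
    [NormedAlgebra ℝ A] {J : A} (hJ : J * J = -1) (θ : ℝ) :
    exp (θ • J) = Real.cos θ • (1 : A) + Real.sin θ • J := by
  let : Algebra ℚ A := Algebra.compHom A (algebraMap ℚ ℝ)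
  let φ : ℂ →ₐ[ℝ] A := Complex.liftAux J hJ
  have hφ : Continuous φ := φ.toLinearMap.continuous_of_finiteDimensional
  calc exp (θ • J) = exp (φ (θ • Complex.I)) := by simp [φ]
    _ = φ (exp (θ • Complex.I)) := (map_exp φ hφ _).symm
    _ = φ (Real.cos θ • 1 + Real.sin θ • Complex.I) := by
      rw [Complex.real_smul, ← Complex.exp_eq_exp_ℂ, Complex.exp_mul_I]
      simp [Complex.real_smul, Complex.ofReal_cos, Complex.ofReal_sin]
    _ = Real.cos θ • (1 : A) + Real.sin θ • J := by
      rw [map_add, map_smul, map_smul, map_one, Complex.liftAux_apply_I]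

theorem Matrix.exp_smul_fin_two_offDiag {z : ℝ} (hz : z ≠ 0) (θ : ℝ) :
    exp (θ • !![0, z⁻¹; -z, 0]) =
      !![Real.cos θ, Real.sin θ / z; -z * Real.sin θ, Real.cos θ] := by
  let := Matrix.linftyOpNormedRing (n := Fin 2) (α := ℝ)
  let := Matrix.linftyOpNormedAlgebra (R := ℝ) (n := Fin 2) (α := ℝ)
  have hJ : !![0, z⁻¹; -z, 0] * !![0, z⁻¹; -z, 0] = (-1 : Matrix (Fin 2) (Fin 2) ℝ) := by
    rw [Matrix.mul_fin_two, Matrix.one_fin_two]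
    simp [hz]
  refine (exp_smul_of_mul_self_eq_neg_one hJ θ).trans ?_
  ext i j
  fin_cases i <;> fin_cases j <;> simp [div_eq_mul_inv, mul_comm]

theorem layer_transfer_matrix_exp_general (ρ a l ω : ℝ) (hρ : 0 < ρ) (ha : 0 < a)
    (hω : ω ≠ 0) :
    NormedSpace.exp
        (l • (!![0, 1/a; -(ρ * ω^2), 0] : Matrix (Fin 2) (Fin 2) ℝ)) =
      !![Real.cos (ω * l / Real.sqrt (a / ρ)),
           Real.sin (ω * l / Real.sqrt (a / ρ)) / (ω * Real.sqrt (ρ * a));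
         -(ω * Real.sqrt (ρ * a)) * Real.sin (ω * l / Real.sqrt (a / ρ)),
           Real.cos (ω * l / Real.sqrt (a / ρ))] := by
  set c := Real.sqrt (a / ρ)
  have hc : 0 < c := Real.sqrt_pos.mpr (div_pos ha hρ)
  have ha_eq : a = ρ * c ^ 2 := by
    rw [Real.sq_sqrt (div_pos ha hρ).le]
    field_simp
  have h_impedance : Real.sqrt (ρ * a) = ρ * c := by
    rw [← Real.sqrt_sq hρ.le, ← Real.sqrt_mul (sq_nonneg ρ), Real.sqrt_sq hρ.le]
    congr 1
    field_simp
  have h_generator : l • (!![0, 1/a; -(ρ * ω^2), 0] : Matrix (Fin 2) (Fin 2) ℝ) =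
      (ω * l / c) • !![0, (ω * Real.sqrt (ρ * a))⁻¹; -(ω * Real.sqrt (ρ * a)), 0] := by
    rw [h_impedance, ha_eq, Matrix.smul_of, Matrix.smul_of]
    congr 1
    ext i j
    fin_cases i <;> fin_cases j <;> simp <;> field_simp
  have hz : ω * Real.sqrt (ρ * a) ≠ 0 := mul_ne_zero hω (Real.sqrt_pos.mpr (mul_pos hρ ha)).ne'
  rw [h_generator, Matrix.exp_smul_fin_two_offDiag hz]

/-- the matrix exponential of `l • ![![0, 1/a], ![−ρω², 0]]` is the
layer transfer matrix of a rod layer with density `ρ`, stiffness `a`, thickness `l`. -/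
theorem layer_transfer_matrix_exp (ρ a l ω : ℝ) (hρ : 0 < ρ) (ha : 0 < a) (hl : 0 < l)
    (hω : ω ≠ 0) :
    NormedSpace.exp
        (l • (!![0, 1/a; -(ρ * ω^2), 0] : Matrix (Fin 2) (Fin 2) ℝ)) =
      !![Real.cos (ω * l / Real.sqrt (a / ρ)),
           Real.sin (ω * l / Real.sqrt (a / ρ)) / (ω * Real.sqrt (ρ * a));
         -(ω * Real.sqrt (ρ * a)) * Real.sin (ω * l / Real.sqrt (a / ρ)),
           Real.cos (ω * l / Real.sqrt (a / ρ))] :=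
  layer_transfer_matrix_exp_general ρ a l ω hρ ha hω
end

section
/- Let N ≥ 1, let ρ, a, l : Fin N → ℝ have all entries positive, set c_i = √(a_i/ρ_i), r_i(ω) = ω*l_i/c_i and ζ_i = √(ρ_i * a_i), and let η be the half-trace function of the cell. Suppose ω ∈ ℝ satisfies cos(r_i(ω)) ≠ 0 for every i. Then η(ω) = (∏_i cos(r_i(ω))) * Σ_{S ⊆ Fin N, |S| even} (−1)^{|S|/2} * γ_S * ∏_{i ∈ S} tan(r_i(ω)), where for S with increasing enumeration i_1 < i_2 < … < i_{2k}, γ_S = (1/2)*((∏_{j=1}^{k} ζ_{i_{2j}}/ζ_{i_{2j−1}}) + (∏_{j=1}^{k} ζ_{i_{2j−1}}/ζ_{i_{2j}})) (with γ_∅ = 1). -/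
/-- Layer transfer matrix of a rod layer with linear density `ρ`, axial stiffness `a`,
thickness `l`, at circular frequency `ω` (Lean's division-by-zero convention makes
`layerT ρ a l 0 = 1`). -/
noncomputable def layerT (ρ a l ω : ℝ) : Matrix (Fin 2) (Fin 2) ℝ :=
  !![Real.cos (ω * l / Real.sqrt (a / ρ)),
       Real.sin (ω * l / Real.sqrt (a / ρ)) / (ω * Real.sqrt (ρ * a));
     -(ω * Real.sqrt (ρ * a)) * Real.sin (ω * l / Real.sqrt (a / ρ)),
       Real.cos (ω * l / Real.sqrt (a / ρ))]

/-- Half-trace function of the `N`-layer unit cell described by `ρ`, `a`, `l`. -/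
noncomputable def halfTrace (N : ℕ) (ρ a l : Fin N → ℝ) (ω : ℝ) : ℝ :=
  (1/2) * Matrix.trace (List.ofFn (fun i => layerT (ρ i) (a i) (l i) ω)).prod

/-- The impedance coefficient `γ_S`: for `S` with increasing enumeration
`i₁ < i₂ < … < i_{2k}` (the elements of odd rank `1, 3, …` in `S` being `i₂, i₄, …`),
`γ_S = (1/2) * ((∏_j ζ_{i_{2j}}/ζ_{i_{2j-1}}) + (∏_j ζ_{i_{2j-1}}/ζ_{i_{2j}}))`,
with `γ_∅ = 1`. -/
noncomputable def gam {N : ℕ} (ζ : Fin N → ℝ) (S : Finset (Fin N)) : ℝ :=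
  (1/2) * ((∏ i ∈ S, if Odd (S.filter (· < i)).card then ζ i else (ζ i)⁻¹) +
           (∏ i ∈ S, if Odd (S.filter (· < i)).card then (ζ i)⁻¹ else ζ i))

/-!
Each layer matrix is `cos rᵢ • (1 + Jᵢ)` with `Jᵢ` antidiagonal, so the ordered product of the
`1 + Jᵢ` expands into a sum over subsets `S` of the ordered products of the `Jᵢ`, `i ∈ S`.
A product of antidiagonal `2 × 2` matrices is diagonal or antidiagonal according to the parity
of the number of factors, with entries the products taking alternately upper and lower entries.
Hence only even `S` contribute to the trace, each with `(-1)^(|S|/2) • 2γ_S • ∏_{i ∈ S} tan rᵢ`: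
half of the factors carry `ω` and the other half `ω⁻¹`.
-/

open Finset

section OrderedProduct

variable {ι : Type*} [LinearOrder ι]

def sortedProd {M : Type*} [Monoid M] (s : Finset ι) (f : ι → M) : M :=
  ((s.sort (· ≤ ·)).map f).prod

@[simp]
lemma sortedProd_empty {M : Type*} [Monoid M] (f : ι → M) : sortedProd ∅ f = 1 := by
  simp [sortedProd]

lemma sortedProd_insert_of_lt {M : Type*} [Monoid M] {a : ι} {s : Finset ι}
    (ha : ∀ x ∈ s, a < x) (f : ι → M) :
    sortedProd (insert a s) f = f a * sortedProd s f := by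
  rw [sortedProd, sort_insert _ (fun x hx => (ha x hx).le) (fun h => lt_irrefl a (ha a h))]
  rfl

lemma sortedProd_univ_fin {M : Type*} [Monoid M] {n : ℕ} (f : Fin n → M) :
    sortedProd univ f = (List.ofFn f).prod := by
  rw [sortedProd, Fin.sort_univ, List.ofFn_eq_map]

lemma sortedProd_smul {R A : Type*} [CommSemiring R] [Semiring A] [Algebra R A]
    (s : Finset ι) (c : ι → R) (f : ι → A) :
    sortedProd s (fun i => c i • f i) = (∏ i ∈ s, c i) • sortedProd s f := by
  induction s using Finset.induction_on_min with
  | empty => simp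
  | insert a s ha ih =>
    rw [sortedProd_insert_of_lt ha, sortedProd_insert_of_lt ha, ih,
      prod_insert (fun h => lt_irrefl a (ha a h)), smul_mul_smul_comm]

lemma sortedProd_one_add {R : Type*} [Semiring R] (s : Finset ι) (f : ι → R) :
    sortedProd s (fun i => 1 + f i) = ∑ t ∈ s.powerset, sortedProd t f := by
  induction s using Finset.induction_on_min with
  | empty => simp
  | insert a s ha ih =>
    have has : a ∉ s := fun h => lt_irrefl a (ha a h)
    rw [sortedProd_insert_of_lt ha, ih, sum_powerset_insert has, add_mul, one_mul, mul_sum]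
    congr 1
    exact sum_congr rfl fun t ht =>
      (sortedProd_insert_of_lt (fun x hx => ha x (mem_powerset.1 ht hx)) f).symm

end OrderedProduct

section AlternatingProduct

variable {ι : Type*} [LinearOrder ι] {M : Type*} [CommMonoid M]

def altProd (f g : ι → M) (s : Finset ι) : M :=
  ∏ i ∈ s, if Odd (s.filter (· < i)).card then g i else f i

lemma card_filter_lt_insert_of_lt {a : ι} {s : Finset ι} (ha : ∀ x ∈ s, a < x) {i : ι}
    (hi : i ∈ s) : ((insert a s).filter (· < i)).card = (s.filter (· < i)).card + 1 := by
  rw [filter_insert, if_pos (ha i hi),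
    card_insert_of_notMem fun h => lt_irrefl a (ha a (mem_filter.1 h).1)]

lemma filter_lt_insert_self_of_lt {a : ι} {s : Finset ι} (ha : ∀ x ∈ s, a < x) :
    (insert a s).filter (· < a) = ∅ := by
  rw [filter_insert, if_neg (lt_irrefl a), filter_eq_empty_iff]
  exact fun x hx => not_lt.2 (ha x hx).le

@[simp]
lemma altProd_empty (f g : ι → M) : altProd f g ∅ = 1 := by
  simp [altProd]

lemma altProd_insert_of_lt {a : ι} {s : Finset ι} (ha : ∀ x ∈ s, a < x) (f g : ι → M) :
    altProd f g (insert a s) = f a * altProd g f s := by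
  rw [altProd, prod_insert (fun h => lt_irrefl a (ha a h)), filter_lt_insert_self_of_lt ha,
    altProd]
  simp only [card_empty, Nat.not_odd_zero, if_false]
  congr 1
  refine prod_congr rfl fun i hi => ?_
  simp only [card_filter_lt_insert_of_lt ha hi, Nat.odd_add_one, ite_not]

lemma card_filter_odd_card_filter_lt (s : Finset ι) :
    (s.filter fun i => Odd (s.filter (· < i)).card).card = s.card / 2 := by
  induction s using Finset.induction_on_min with
  | empty => simp
  | insert a s ha ih =>
    have has : a ∉ s := fun h => lt_irrefl a (ha a h)
    have hodd : (insert a s).filter (fun i => Odd ((insert a s).filter (· < i)).card) =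
        s.filter fun i => ¬ Odd (s.filter (· < i)).card := by
      rw [filter_insert, filter_lt_insert_self_of_lt ha, if_neg (by simp)]
      exact filter_congr fun i hi => by rw [card_filter_lt_insert_of_lt ha hi, Nat.odd_add_one]
    have := card_filter_add_card_filter_not (s := s) (p := fun i => Odd (s.filter (· < i)).card)
    rw [hodd, card_insert_of_notMem has]
    omega

lemma altProd_mul (f g f' g' : ι → M) (s : Finset ι) :
    altProd (fun i => f i * f' i) (fun i => g i * g' i) s = altProd f g s * altProd f' g' s := by
  rw [altProd, altProd, altProd, ← prod_mul_distrib]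
  exact prod_congr rfl fun i _ => by split_ifs <;> rfl

lemma altProd_const_of_even (c d : M) {s : Finset ι} (hs : Even s.card) :
    altProd (fun _ => c) (fun _ => d) s = (c * d) ^ (s.card / 2) := by
  have := card_filter_add_card_filter_not (s := s) (p := fun i => Odd (s.filter (· < i)).card)
  rw [card_filter_odd_card_filter_lt] at this
  obtain ⟨k, hk⟩ := hs
  rw [altProd, prod_ite, prod_const, prod_const, card_filter_odd_card_filter_lt,
    show (s.filter fun i => ¬ Odd (s.filter (· < i)).card).card = s.card / 2 by omega,
    mul_pow, mul_comm]

lemma altProd_self (f : ι → M) (s : Finset ι) : altProd f f s = ∏ i ∈ s, f i := by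
  simp [altProd]

end AlternatingProduct

section AntidiagonalProduct

variable {ι : Type*} [LinearOrder ι] {R : Type*} [CommSemiring R]

lemma sortedProd_antidiag (p q : ι → R) (s : Finset ι) :
    sortedProd s (fun i => !![0, p i; q i, 0]) =
      if Even s.card then !![altProd p q s, 0; 0, altProd q p s]
      else !![0, altProd p q s; altProd q p s, 0] := by
  induction s using Finset.induction_on_min with
  | empty => simp [Matrix.one_fin_two]
  | insert a s ha ih =>
    rw [sortedProd_insert_of_lt ha, ih, card_insert_of_notMem (fun h => lt_irrefl a (ha a h)),
      altProd_insert_of_lt ha, altProd_insert_of_lt ha]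
    by_cases h : Even s.card <;> simp [h, Nat.even_add_one]

lemma trace_sortedProd_one_add_antidiag (p q : ι → R) (s : Finset ι) :
    (sortedProd s (fun i => 1 + !![0, p i; q i, 0])).trace =
      ∑ t ∈ s.powerset with Even t.card, (altProd p q t + altProd q p t) := by
  rw [sortedProd_one_add, Matrix.trace_sum, sum_filter]
  refine sum_congr rfl fun t _ => ?_
  rw [sortedProd_antidiag]
  split_ifs <;> simp [Matrix.trace_fin_two]

end AntidiagonalProduct

lemma altProd_add_altProd_of_even {ι K : Type*} [LinearOrder ι] [Field K] (ω : K) (ζ t : ι → K) {s : Finset ι} (hs : Even s.card) :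
    altProd (fun i => t i / (ω * ζ i)) (fun i => -(ω * ζ i * t i)) s +
        altProd (fun i => -(ω * ζ i * t i)) (fun i => t i / (ω * ζ i)) s =
      (-1) ^ (s.card / 2) * (altProd (fun i => (ζ i)⁻¹) ζ s + altProd ζ (fun i => (ζ i)⁻¹) s) *
        ((ω⁻¹ * ω) ^ (s.card / 2) * ∏ i ∈ s, t i) := by
  have hp : (fun i => t i / (ω * ζ i)) = fun i => ω⁻¹ * (ζ i)⁻¹ * t i := by
    ext i; rw [div_eq_inv_mul, mul_inv]
  have hq : (fun i => -(ω * ζ i * t i)) = fun i => -ω * ζ i * t i := by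
    ext i; ring
  rw [hp, hq, altProd_mul, altProd_mul, altProd_mul, altProd_mul, altProd_self,
    altProd_const_of_even _ _ hs, altProd_const_of_even _ _ hs,
    show ω⁻¹ * -ω = -1 * (ω⁻¹ * ω) by ring, show -ω * ω⁻¹ = -1 * (ω⁻¹ * ω) by ring, mul_pow]
  ring

open Real in
lemma layerT_eq_cos_smul (ρ a l ω : ℝ) (hcos : cos (ω * l / √(a / ρ)) ≠ 0) :
    layerT ρ a l ω = cos (ω * l / √(a / ρ)) •
      (1 + !![0, tan (ω * l / √(a / ρ)) / (ω * √(ρ * a));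
              -(ω * √(ρ * a) * tan (ω * l / √(a / ρ))), 0]) := by
  have hsin : sin (ω * l / √(a / ρ)) = cos (ω * l / √(a / ρ)) * tan (ω * l / √(a / ρ)) := by
    rw [tan_eq_sin_div_cos, mul_div_cancel₀ _ hcos]
  rw [layerT, hsin, Matrix.one_fin_two]
  ext i j
  fin_cases i <;> fin_cases j <;> simp <;> ring

lemma gam_eq_altProd {N : ℕ} (ζ : Fin N → ℝ) (S : Finset (Fin N)) :
    gam ζ S = 1 / 2 * (altProd (fun i => (ζ i)⁻¹) ζ S + altProd ζ (fun i => (ζ i)⁻¹) S) :=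
  rfl

theorem halfTrace_eq_cos_prod_mul_sum_general (N : ℕ) (ρ a l : Fin N → ℝ) (ω : ℝ)
    (hcos : ∀ i, Real.cos (ω * l i / Real.sqrt (a i / ρ i)) ≠ 0) :
    halfTrace N ρ a l ω =
      (∏ i, Real.cos (ω * l i / Real.sqrt (a i / ρ i))) *
        ∑ S ∈ Finset.univ.filter (fun S : Finset (Fin N) => Even S.card),
          (-1 : ℝ)^(S.card / 2) * gam (fun i => Real.sqrt (ρ i * a i)) S *
            ∏ i ∈ S, Real.tan (ω * l i / Real.sqrt (a i / ρ i)) := by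
  have hscale (S : Finset (Fin N)) : (ω⁻¹ * ω) ^ (S.card / 2) *
      ∏ i ∈ S, Real.tan (ω * l i / Real.sqrt (a i / ρ i)) =
        ∏ i ∈ S, Real.tan (ω * l i / Real.sqrt (a i / ρ i)) := by
    -- At `ω = 0` the factor `ω⁻¹ * ω` is the junk value `0`, but then every `tan rᵢ` vanishes.
    rcases eq_or_ne ω 0 with rfl | hω
    · rcases S.eq_empty_or_nonempty with rfl | ⟨i, hi⟩
      · simp
      · simp [prod_eq_zero hi]
    · rw [inv_mul_cancel₀ hω, one_pow, one_mul]
  rw [halfTrace, funext fun i => layerT_eq_cos_smul _ _ _ _ (hcos i), ← sortedProd_univ_fin,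
    sortedProd_smul, Matrix.trace_smul, trace_sortedProd_one_add_antidiag, powerset_univ,
    smul_eq_mul, mul_sum, mul_sum, mul_sum]
  refine sum_congr rfl fun S hS => ?_
  rw [altProd_add_altProd_of_even _ _ _ (mem_filter.1 hS).2, gam_eq_altProd, hscale S]
  ring

/-- closed form of the half-trace function, when all cosines are nonzero:
`η(ω) = (∏ᵢ cos rᵢ) * Σ_{S even} (−1)^{|S|/2} γ_S ∏_{i∈S} tan rᵢ`. -/
theorem halfTrace_eq_cos_prod_mul_sum (N : ℕ) (hN : 1 ≤ N) (ρ a l : Fin N → ℝ)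
    (hρ : ∀ i, 0 < ρ i) (ha : ∀ i, 0 < a i) (hl : ∀ i, 0 < l i) (ω : ℝ)
    (hcos : ∀ i, Real.cos (ω * l i / Real.sqrt (a i / ρ i)) ≠ 0) :
    halfTrace N ρ a l ω =
      (∏ i, Real.cos (ω * l i / Real.sqrt (a i / ρ i))) *
        ∑ S ∈ Finset.univ.filter (fun S : Finset (Fin N) => Even S.card),
          (-1 : ℝ)^(S.card / 2) * gam (fun i => Real.sqrt (ρ i * a i)) S *
            ∏ i ∈ S, Real.tan (ω * l i / Real.sqrt (a i / ρ i)) :=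
  halfTrace_eq_cos_prod_mul_sum_general N ρ a l ω hcos
end

section
/- Let N ≥ 1 and let ρ, a, l : Fin N → ℝ have all entries positive, and let η be the half-trace function of the cell. Then the second derivative of η at the origin equals minus the curvature κ = (Σ_i l_i*ρ_i) * (Σ_i l_i/a_i); that is, iteratedDeriv 2 η 0 = −(Σ_i l_i*ρ_i) * (Σ_i l_i/a_i). -/
/-!
Conjugating each layer matrix by `diag(1, ω)` (harmless for the trace) turns it into
`cos (t ω) • 1 + sin (t ω) • J` with transit time `t = l / c` and `J² = -1`, a smooth curve `F`
with `F 0 = 1`, `F' 0 = B := t • J` and `F'' 0 = B²`. For a product of such curves the second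
derivative at `0` is `∑ Bᵢ² + 2 ∑_{i<j} Bᵢ Bⱼ`, whose trace is that of `(∑ Bᵢ)²`. Here
`∑ Bᵢ = !![0, ∑ lᵢ/aᵢ; -∑ lᵢρᵢ, 0]` squares to `-(∑ lᵢρᵢ)(∑ lᵢ/aᵢ) • 1`.
-/

open Matrix

theorem ContinuousLinearMap.iteratedDeriv_comp_left {E F : Type*} [NormedAddCommGroup E]
    [NormedSpace ℝ E] [NormedAddCommGroup F] [NormedSpace ℝ F] (L : E →L[ℝ] F) {f : ℝ → E}
    {n : WithTop ℕ∞} {x : ℝ} (hf : ContDiffAt ℝ n f x) {i : ℕ} (hi : i ≤ n) :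
    iteratedDeriv i (L ∘ f) x = L (iteratedDeriv i f x) := by
  simp [iteratedDeriv_eq_iteratedFDeriv, L.iteratedFDeriv_comp_left hf hi]

theorem list_prod_apply_eq_one {α M : Type*} [Monoid M] {fs : List (α → M)} {x : α}
    (h : ∀ f ∈ fs, f x = 1) : fs.prod x = 1 := by
  rw [Pi.list_prod_apply]
  exact List.prod_eq_one (by simpa using h)

section NormedAlgebra

variable {A : Type*} [NormedRing A] [NormedAlgebra ℝ A]

theorem iteratedDeriv_two_mul {f g : ℝ → A} (hf : ContDiff ℝ 2 f) (hg : ContDiff ℝ 2 g)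
    (x : ℝ) :
    iteratedDeriv 2 (f * g) x =
      iteratedDeriv 2 f x * g x + 2 • (deriv f x * deriv g x) + f x * iteratedDeriv 2 g x := by
  have hf' : Differentiable ℝ (deriv f) :=
    (contDiff_succ_iff_deriv.1 hf).2.2.differentiable one_ne_zero
  have hg' : Differentiable ℝ (deriv g) :=
    (contDiff_succ_iff_deriv.1 hg).2.2.differentiable one_ne_zero
  have hfd : Differentiable ℝ f := hf.differentiable two_ne_zero
  have hgd : Differentiable ℝ g := hg.differentiable two_ne_zero
  have hderiv : deriv (f * g) = fun y => deriv f y * g y + f y * deriv g y :=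
    funext fun y => deriv_mul (hfd y) (hgd y)
  simp only [iteratedDeriv_succ, iteratedDeriv_zero, hderiv]
  rw [(((hf' x).hasDerivAt.fun_mul (hgd x).hasDerivAt).fun_add
    ((hfd x).hasDerivAt.fun_mul (hg' x).hasDerivAt)).deriv]
  abel

theorem contDiff_list_prod {n : WithTop ℕ∞} {fs : List (ℝ → A)}
    (h : ∀ f ∈ fs, ContDiff ℝ n f) : ContDiff ℝ n fs.prod := by
  induction fs with
  | nil => exact contDiff_const
  | cons f fs ih =>
    simp only [List.forall_mem_cons] at h
    exact h.1.mul (ih h.2)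

theorem hasDerivAt_list_prod_of_eq_one {fs : List (ℝ → A)} {x : ℝ}
    (hd : ∀ f ∈ fs, DifferentiableAt ℝ f x) (h1 : ∀ f ∈ fs, f x = 1) :
    HasDerivAt fs.prod (fs.map (deriv · x)).sum x := by
  induction fs with
  | nil => exact hasDerivAt_const x 1
  | cons f fs ih =>
    simp only [List.forall_mem_cons] at hd h1
    simpa [h1.1, list_prod_apply_eq_one h1.2] using hd.1.hasDerivAt.mul (ih hd.2 h1.2)

theorem iteratedDeriv_two_eq_sq_mul {f : ℝ → A} {B : A} (hf : ∀ x, HasDerivAt f (B * f x) x)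
    (x : ℝ) : iteratedDeriv 2 f x = B ^ 2 * f x := by
  have hderiv : deriv f = fun y => B * f y := funext fun y => (hf y).deriv
  simp only [iteratedDeriv_succ, iteratedDeriv_zero, hderiv]
  rw [((hf x).const_mul B).deriv, sq, mul_assoc]

theorem tracial_iteratedDeriv_two_list_prod {M : Type*} [AddCommMonoid M] (τ : A →+ M)
    (hτ : ∀ a b, τ (a * b) = τ (b * a)) {fs : List (ℝ → A)} {x : ℝ}
    (hfs : ∀ f ∈ fs, ContDiff ℝ 2 f ∧ f x = 1 ∧ iteratedDeriv 2 f x = deriv f x ^ 2) :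
    τ (iteratedDeriv 2 fs.prod x) = τ ((fs.map (deriv · x)).sum ^ 2) := by
  induction fs with
  | nil => simp [iteratedDeriv_succ]
  | cons f fs ih =>
    simp only [List.forall_mem_cons] at hfs
    obtain ⟨⟨hf, hf1, hf2⟩, hfs⟩ := hfs
    have hQ : ContDiff ℝ 2 fs.prod := contDiff_list_prod fun g hg => (hfs g hg).1
    have hQ1 : fs.prod x = 1 := list_prod_apply_eq_one fun g hg => (hfs g hg).2.1
    have hQ' : deriv fs.prod x = (fs.map (deriv · x)).sum :=
      (hasDerivAt_list_prod_of_eq_one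
        (fun g hg => ((hfs g hg).1.differentiable two_ne_zero) x)
        fun g hg => (hfs g hg).2.1).deriv
    rw [List.prod_cons, iteratedDeriv_two_mul hf hQ, hQ1, hf1, hf2, hQ', List.map_cons,
      List.sum_cons]
    simp only [map_add, map_nsmul, mul_one, one_mul, ih hfs, sq, add_mul, mul_add,
      hτ (fs.map (deriv · x)).sum (deriv f x)]
    abel

noncomputable def trigCurve (t : ℝ) (J : A) (ω : ℝ) : A :=
  Real.cos (t * ω) • 1 + Real.sin (t * ω) • J

variable (t : ℝ) (J : A)

theorem trigCurve_zero : trigCurve t J 0 = 1 := by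
  simp [trigCurve]

theorem contDiff_trigCurve {n : WithTop ℕ∞} : ContDiff ℝ n (trigCurve t J) := by
  unfold trigCurve
  fun_prop

theorem hasDerivAt_trigCurve (ω : ℝ) :
    HasDerivAt (trigCurve t J) (t • (-Real.sin (t * ω) • 1 + Real.cos (t * ω) • J)) ω := by
  have hlin : HasDerivAt (fun y => t * y) t ω := by simpa using (hasDerivAt_id' ω).const_mul t
  refine ((hlin.cos.smul_const (1 : A)).fun_add (hlin.sin.smul_const J)).congr_deriv ?_
  module

theorem deriv_trigCurve_zero : deriv (trigCurve t J) 0 = t • J := by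
  simp [(hasDerivAt_trigCurve t J 0).deriv]

variable {J} in
theorem hasDerivAt_trigCurve_of_mul_self (hJ : J * J = -1) (ω : ℝ) :
    HasDerivAt (trigCurve t J) ((t • J) * trigCurve t J ω) ω := by
  refine (hasDerivAt_trigCurve t J ω).congr_deriv ?_
  simp only [trigCurve, mul_add, smul_mul_smul_comm, mul_one, hJ, smul_neg]
  module

variable {J} in
theorem iteratedDeriv_two_trigCurve_zero (hJ : J * J = -1) :
    iteratedDeriv 2 (trigCurve t J) 0 = (t • J) ^ 2 := by
  rw [iteratedDeriv_two_eq_sq_mul (hasDerivAt_trigCurve_of_mul_self t hJ), trigCurve_zero, mul_one]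

end NormedAlgebra

-- The topology of this normed structure agrees with the product topology on matrices only up to
-- unfolding, which is why matrix-valued derivatives below are matched by terms rather than `rw`.
attribute [local instance] Matrix.linftyOpNormedRing Matrix.linftyOpNormedAlgebra

noncomputable def layerJ (ρ a : ℝ) : Matrix (Fin 2) (Fin 2) ℝ :=
  !![0, (√(ρ * a))⁻¹; -√(ρ * a), 0]

theorem layerJ_mul_self {ρ a : ℝ} (hρ : 0 < ρ) (ha : 0 < a) :
    layerJ ρ a * layerJ ρ a = -1 := by
  have hz : √(ρ * a) ≠ 0 := (Real.sqrt_pos.2 (mul_pos hρ ha)).ne'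
  ext i j
  fin_cases i <;> fin_cases j <;> simp [layerJ, Matrix.mul_apply, Fin.sum_univ_two, hz]

theorem smul_layerJ {ρ a : ℝ} (l : ℝ) (hρ : 0 < ρ) (ha : 0 < a) :
    (l / √(a / ρ)) • layerJ ρ a = !![0, l / a; -(l * ρ), 0] := by
  have hsplit : √(ρ * a) = ρ * √(a / ρ) := by
    rw [← Real.sqrt_sq hρ.le, ← Real.sqrt_mul (sq_nonneg ρ), Real.sqrt_sq hρ.le]
    congr 1
    field_simp
  have hc2 : √(a / ρ) ^ 2 = a / ρ := Real.sq_sqrt (div_pos ha hρ).le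
  ext i j
  fin_cases i <;> fin_cases j <;> simp [layerJ, hsplit]
  · field_simp
    rw [hc2]
    field_simp
  · field_simp

noncomputable def scaledLayerT (ρ a l : ℝ) : ℝ → Matrix (Fin 2) (Fin 2) ℝ :=
  trigCurve (l / √(a / ρ)) (layerJ ρ a)

theorem deriv_scaledLayerT_zero {ρ a : ℝ} (l : ℝ) (hρ : 0 < ρ) (ha : 0 < a) :
    deriv (scaledLayerT ρ a l) 0 = !![0, l / a; -(l * ρ), 0] :=
  (deriv_trigCurve_zero _ _).trans (smul_layerJ l hρ ha)

theorem iteratedDeriv_two_scaledLayerT_zero {ρ a : ℝ} (l : ℝ) (hρ : 0 < ρ) (ha : 0 < a) :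
    iteratedDeriv 2 (scaledLayerT ρ a l) 0 = deriv (scaledLayerT ρ a l) 0 ^ 2 :=
  (iteratedDeriv_two_trigCurve_zero _ (layerJ_mul_self hρ ha)).trans
    (congrArg (· ^ 2) (deriv_trigCurve_zero _ _).symm)

theorem layerT_zero (ρ a l : ℝ) : layerT ρ a l 0 = 1 := by
  ext i j
  fin_cases i <;> fin_cases j <;> simp [layerT]

theorem layerT_eq_conj (ρ a l : ℝ) {ω : ℝ} (hω : ω ≠ 0) :
    layerT ρ a l ω = !![1, 0; 0, ω] * scaledLayerT ρ a l ω * !![1, 0; 0, ω⁻¹] := by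
  have harg : l / √(a / ρ) * ω = ω * l / √(a / ρ) := by ring
  rw [layerT, scaledLayerT, trigCurve, layerJ, harg, Matrix.one_fin_two]
  ext i j
  fin_cases i <;> fin_cases j <;> simp [Matrix.mul_apply, Fin.sum_univ_two] <;> field_simp

theorem halfTrace_eq_trace_list_prod (N : ℕ) (ρ a l : Fin N → ℝ) :
    halfTrace N ρ a l =
      fun ω => 1 / 2 * trace ((List.ofFn fun i => scaledLayerT (ρ i) (a i) (l i)).prod ω) := by
  funext ω
  rw [halfTrace, Pi.list_prod_apply, List.map_ofFn, Function.comp_def]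
  congr 1
  rcases eq_or_ne ω 0 with rfl | hω
  · simp [layerT_zero, scaledLayerT, trigCurve_zero]
  let u : (Matrix (Fin 2) (Fin 2) ℝ)ˣ :=
    ⟨!![1, 0; 0, ω], !![1, 0; 0, ω⁻¹], by simp [hω, one_fin_two], by simp [hω, one_fin_two]⟩
  have hconj : (fun i => layerT (ρ i) (a i) (l i) ω) =
      fun i => ConjAct.toConjAct u • scaledLayerT (ρ i) (a i) (l i) ω := by
    funext i
    rw [ConjAct.units_smul_def]
    exact layerT_eq_conj _ _ _ hω
  rw [hconj, ← Function.comp_def (ConjAct.toConjAct u • ·), ← List.map_ofFn, ← List.smul_prod',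
    ConjAct.units_smul_def, ConjAct.ofConjAct_toConjAct, trace_units_conj]

theorem iteratedDeriv_halfTrace (N : ℕ) (ρ a l : Fin N → ℝ) (n : ℕ) (x : ℝ) :
    iteratedDeriv n (halfTrace N ρ a l) x = 1 / 2 *
      trace (iteratedDeriv n (List.ofFn fun i => scaledLayerT (ρ i) (a i) (l i)).prod x) := by
  have hP : ContDiff ℝ n (List.ofFn fun i => scaledLayerT (ρ i) (a i) (l i)).prod :=
    contDiff_list_prod fun f hf => by
      obtain ⟨i, rfl⟩ := List.mem_ofFn.1 hf
      exact contDiff_trigCurve _ _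
  rw [halfTrace_eq_trace_list_prod, iteratedDeriv_const_mul_field]
  exact congrArg _ ((traceLinearMap (Fin 2) ℝ ℝ).toContinuousLinearMap.iteratedDeriv_comp_left
    hP.contDiffAt le_rfl)

theorem halfTrace_iteratedDeriv_two_general (N : ℕ) (ρ a l : Fin N → ℝ)
    (hρ : ∀ i, 0 < ρ i) (ha : ∀ i, 0 < a i) :
    iteratedDeriv 2 (halfTrace N ρ a l) 0 =
      -((∑ i, l i * ρ i) * (∑ i, l i / a i)) := by
  set fs := List.ofFn fun i => scaledLayerT (ρ i) (a i) (l i)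
  have hτ : trace (iteratedDeriv 2 fs.prod 0) = trace ((fs.map (deriv · 0)).sum ^ 2) :=
    tracial_iteratedDeriv_two_list_prod (traceAddMonoidHom (Fin 2) ℝ) trace_mul_comm
      fun f hf => by
        obtain ⟨i, rfl⟩ := List.mem_ofFn.1 hf
        exact ⟨contDiff_trigCurve _ _, trigCurve_zero _ _,
          iteratedDeriv_two_scaledLayerT_zero _ (hρ i) (ha i)⟩
  have hsum : (fs.map (deriv · 0)).sum = !![0, ∑ i, l i / a i; -∑ i, l i * ρ i, 0] := by
    simp only [fs, List.map_ofFn, List.sum_ofFn, Function.comp_def,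
      deriv_scaledLayerT_zero _ (hρ _) (ha _)]
    ext i j
    fin_cases i <;> fin_cases j <;> simp [Matrix.sum_apply]
  rw [iteratedDeriv_halfTrace, hτ, hsum]
  simp [sq, trace_fin_two]
  ring

/-- the second derivative of the half-trace function at the origin is
minus the curvature `κ = (Σᵢ lᵢρᵢ)(Σᵢ lᵢ/aᵢ)`. -/
theorem halfTrace_iteratedDeriv_two (N : ℕ) (hN : 1 ≤ N) (ρ a l : Fin N → ℝ)
    (hρ : ∀ i, 0 < ρ i) (ha : ∀ i, 0 < a i) (hl : ∀ i, 0 < l i) :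
    iteratedDeriv 2 (halfTrace N ρ a l) 0 =
      -((∑ i, l i * ρ i) * (∑ i, l i / a i)) :=
  halfTrace_iteratedDeriv_two_general N ρ a l hρ ha
end

section
/- Let N ≥ 1, let ρ, a : Fin N → ℝ have all entries positive, and let L > 0. Work in EuclideanSpace ℝ (Fin N), write a⁻¹ for the vector with entries 1/a_i, and set v = (1/‖ρ‖) • ρ + (1/‖a⁻¹‖) • a⁻¹ and l* = (L/‖v‖) • v. Then: (i) ‖l*‖ = L; (ii) for every l ∈ EuclideanSpace ℝ (Fin N) with ‖l‖ = L, (Σ_i l_i*ρ_i)*(Σ_i l_i/a_i) ≤ (Σ_i l*_i*ρ_i)*(Σ_i l*_i/a_i); and (iii) the maximum value is (Σ_i l*_i*ρ_i)*(Σ_i l*_i/a_i) = L² * ‖ρ‖ * ‖a⁻¹‖ * (1 + ⟪ρ/‖ρ‖, a⁻¹/‖a⁻¹‖⟫)/2. -/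
open RealInnerProductSpace

/-! For unit vectors `p = ρ̂`, `q = â⁻¹` one has `κ(l) = ‖ρ‖ ‖a⁻¹‖ ⟪l, p⟫ ⟪l, q⟫`, and AM-GM followed
by Cauchy–Schwarz gives `4 ⟪l, p⟫ ⟪l, q⟫ ≤ ⟪l, p + q⟫² ≤ ‖l‖² ‖p + q‖² = 2 L² (1 + ⟪p, q⟫)`.
Both inequalities are equalities for `l` parallel to `p + q`, which is nonzero because the
entries of `ρ` and `a⁻¹` are positive, so `⟪p, q⟫ ≥ 0`. -/

section UnitVectors

variable {E : Type*} [NormedAddCommGroup E] [InnerProductSpace ℝ E] {p q : E}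

theorem norm_add_sq_of_norm_eq_one (hp : ‖p‖ = 1) (hq : ‖q‖ = 1) :
    ‖p + q‖ ^ 2 = 2 * (1 + ⟪p, q⟫) := by
  rw [norm_add_sq_real, hp, hq]; ring

theorem inner_mul_inner_le_of_norm_eq_one (hp : ‖p‖ = 1) (hq : ‖q‖ = 1) (l : E) :
    ⟪l, p⟫ * ⟪l, q⟫ ≤ ‖l‖ ^ 2 * ((1 + ⟪p, q⟫) / 2) := by
  have hsum := norm_add_sq_of_norm_eq_one hp hq
  have hcs : ⟪l, p + q⟫ ^ 2 ≤ ‖l‖ ^ 2 * ‖p + q‖ ^ 2 := by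
    rw [← mul_pow, ← sq_abs]
    exact pow_le_pow_left₀ (abs_nonneg _) (abs_real_inner_le_norm l (p + q)) 2
  rw [inner_add_right, hsum] at hcs
  -- AM-GM: `4xy ≤ (x + y)²`
  nlinarith [sq_nonneg (⟪l, p⟫ - ⟪l, q⟫)]

theorem inner_mul_inner_smul_add_of_norm_eq_one (hp : ‖p‖ = 1) (hq : ‖q‖ = 1) (L : ℝ) :
    ⟪(L / ‖p + q‖) • (p + q), p⟫ * ⟪(L / ‖p + q‖) • (p + q), q⟫ =
      L ^ 2 * ((1 + ⟪p, q⟫) / 2) := by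
  have hsum := norm_add_sq_of_norm_eq_one hp hq
  have hpp : ⟪p, p⟫ = 1 := by rw [real_inner_self_eq_norm_sq, hp]; norm_num
  have hqq : ⟪q, q⟫ = 1 := by rw [real_inner_self_eq_norm_sq, hq]; norm_num
  rw [real_inner_smul_left, real_inner_smul_left, inner_add_left, inner_add_left, hpp, hqq,
    real_inner_comm p q]
  rcases eq_or_ne (1 + ⟪p, q⟫) 0 with hc | hc
  · rw [add_comm ⟪p, q⟫, hc]; ring
  · have hv : ‖p + q‖ ≠ 0 := fun h => hc (by nlinarith)
    field_simp
    rw [hsum]; ring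

theorem add_ne_zero_of_norm_eq_one_of_inner_nonneg (hp : ‖p‖ = 1) (hq : ‖q‖ = 1)
    (hpq : 0 ≤ ⟪p, q⟫) : p + q ≠ 0 := by
  intro h
  have := norm_add_sq_of_norm_eq_one hp hq
  rw [h, norm_zero] at this
  linarith

end UnitVectors

theorem norm_div_norm_smul {E : Type*} [NormedAddCommGroup E] [NormedSpace ℝ E] {v : E}
    (hv : v ≠ 0) {L : ℝ} (hL : 0 ≤ L) : ‖(L / ‖v‖) • v‖ = L := by
  rw [norm_smul, Real.norm_of_nonneg (by positivity), div_mul_cancel₀ _ (norm_ne_zero_iff.mpr hv)]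

theorem real_inner_eq_norm_mul_inner_normalize {E : Type*} [NormedAddCommGroup E]
    [InnerProductSpace ℝ E] (l x : E) : ⟪l, x⟫ = ‖x‖ * ⟪l, (1 / ‖x‖) • x⟫ := by
  rw [real_inner_smul_right]
  rcases eq_or_ne x 0 with rfl | hx
  · simp
  · field_simp

theorem EuclideanSpace.sum_mul_eq_inner {ι : Type*} [Fintype ι] (l w : EuclideanSpace ℝ ι) :
    ∑ i, l i * w i = ⟪l, w⟫ := by
  simp [PiLp.inner_apply, mul_comm]

theorem EuclideanSpace.inner_nonneg_of_nonneg {ι : Type*} [Fintype ι] {x y : EuclideanSpace ℝ ι}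
    (hx : ∀ i, 0 ≤ x i) (hy : ∀ i, 0 ≤ y i) : 0 ≤ ⟪x, y⟫ := by
  rw [← EuclideanSpace.sum_mul_eq_inner]
  exact Finset.sum_nonneg fun i _ => mul_nonneg (hx i) (hy i)

/-- optimal thickness vector. Given positive densities `ρ` and stiffnesses
`a` and a prescribed norm `L > 0`, the vector `l* = (L/‖v‖) • v` with
`v = ρ/‖ρ‖ + a⁻¹/‖a⁻¹‖` has norm `L`, maximizes `κ(l) = (Σᵢ lᵢρᵢ)(Σᵢ lᵢ/aᵢ)` among all
`l` with `‖l‖ = L`, and the maximum value is `L² ‖ρ‖ ‖a⁻¹‖ (1 + ⟪ρ̂, â⁻¹⟫)/2`. -/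
theorem optimal_thickness (N : ℕ) (hN : 1 ≤ N) (ρ a : EuclideanSpace ℝ (Fin N))
    (hρ : ∀ i, 0 < ρ i) (ha : ∀ i, 0 < a i) (L : ℝ) (hL : 0 < L)
    (ainv v lstar : EuclideanSpace ℝ (Fin N))
    (hainv : ainv = fun i => 1 / a i)
    (hv : v = (1/‖ρ‖) • ρ + (1/‖ainv‖) • ainv)
    (hlstar : lstar = (L/‖v‖) • v) :
    ‖lstar‖ = L ∧
    (∀ l : EuclideanSpace ℝ (Fin N), ‖l‖ = L →
      (∑ i, l i * ρ i) * (∑ i, l i / a i) ≤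
        (∑ i, lstar i * ρ i) * (∑ i, lstar i / a i)) ∧
    (∑ i, lstar i * ρ i) * (∑ i, lstar i / a i) =
      L^2 * ‖ρ‖ * ‖ainv‖ * ((1 + ⟪(1/‖ρ‖) • ρ, (1/‖ainv‖) • ainv⟫) / 2) := by
  have hainv_apply (i : Fin N) : ainv i = 1 / a i := congrFun hainv i
  have hκ (l : EuclideanSpace ℝ (Fin N)) :
      (∑ i, l i * ρ i) * (∑ i, l i / a i) =
        ‖ρ‖ * ‖ainv‖ * (⟪l, (1 / ‖ρ‖) • ρ⟫ * ⟪l, (1 / ‖ainv‖) • ainv⟫) := by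
    simp only [div_eq_mul_one_div (l _) (a _), ← hainv_apply, EuclideanSpace.sum_mul_eq_inner]
    rw [real_inner_eq_norm_mul_inner_normalize l ρ, real_inner_eq_norm_mul_inner_normalize l ainv]
    ring
  have hρ0 : ρ ≠ 0 := fun h => (hρ ⟨0, hN⟩).ne' (by simp [h])
  have hainv_pos (i : Fin N) : 0 < ainv i := by rw [hainv_apply]; exact one_div_pos.2 (ha i)
  have hainv0 : ainv ≠ 0 := fun h => (hainv_pos ⟨0, hN⟩).ne' (by simp [h])
  have hp : ‖(1 / ‖ρ‖) • ρ‖ = 1 := by rw [one_div]; exact norm_smul_inv_norm hρ0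
  have hq : ‖(1 / ‖ainv‖) • ainv‖ = 1 := by rw [one_div]; exact norm_smul_inv_norm hainv0
  have hpq : 0 ≤ ⟪(1 / ‖ρ‖) • ρ, (1 / ‖ainv‖) • ainv⟫ := by
    have := EuclideanSpace.inner_nonneg_of_nonneg (fun i => (hρ i).le) fun i => (hainv_pos i).le
    rw [real_inner_smul_left, real_inner_smul_right]
    positivity
  have hv0 : v ≠ 0 := hv ▸ add_ne_zero_of_norm_eq_one_of_inner_nonneg hp hq hpq
  have hκstar : (∑ i, lstar i * ρ i) * (∑ i, lstar i / a i) =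
      L ^ 2 * ‖ρ‖ * ‖ainv‖ * ((1 + ⟪(1 / ‖ρ‖) • ρ, (1 / ‖ainv‖) • ainv⟫) / 2) := by
    rw [hκ, hlstar, hv, inner_mul_inner_smul_add_of_norm_eq_one hp hq]
    ring
  refine ⟨hlstar ▸ norm_div_norm_smul hv0 hL.le, fun l hl => ?_, hκstar⟩
  rw [hκstar, hκ]
  calc _ ≤ ‖ρ‖ * ‖ainv‖ * (‖l‖ ^ 2 * ((1 + ⟪(1 / ‖ρ‖) • ρ, (1 / ‖ainv‖) • ainv⟫) / 2)) :=
        mul_le_mul_of_nonneg_left (inner_mul_inner_le_of_norm_eq_one hp hq l) (by positivity)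
    _ = _ := by rw [hl]; ring
end
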